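/- Fix α > 0 and let g(u,v) = d_R(u,v)^{−α}. There are constants c_1, c_2 > 0 (depending only on α) such that, with probability 1 − o(1) as n = 2^k − 1 → ∞, the random ringed tree satisfies c_1·log n ≤ δ(RRT(k, g)) ≤ c_2·log n. -/

import Mathlib

/-- The Gromov four-point quantity `δ(u,v,w,x)`: with the three pairings of the
four vertices sorted, half the difference between the largest and the second
largest pair-sum of graph distances. -/
noncomputable def deltaFour {V : Type*} (G : SimpleGraph V) (u v w x : V) : ℝ :=
  let a : ℝ := (G.dist u v : ℝ) + (G.dist w x : ℝ)
  let b : ℝ := (G.dist u x : ℝ) + (G.dist v w : ℝ)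
  let c : ℝ := (G.dist u w : ℝ) + (G.dist v x : ℝ)
  (2 * max a (max b c) + min a (min b c) - (a + b + c)) / 2

/-- The hyperbolicity `δ(G)` of a graph: the supremum of `δ(u,v,w,x)` over all
quadruples of vertices. -/
noncomputable def hyperbolicity {V : Type*} (G : SimpleGraph V) : ℝ :=
  ⨆ u, ⨆ v, ⨆ w, ⨆ x, deltaFour G u v w x

/-- Vertex set of the ringed tree with `k` levels: level `i` (for `i < k`) consists of the
integers `{0, …, 2^i - 1}`. -/
abbrev RTV (k : ℕ) : Type := Σ i : Fin k, Fin (2 ^ (i : ℕ))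

/-- Tree adjacency: each vertex `σ` at level `i` is joined to its children `2σ` and `2σ+1`
at level `i+1`. -/
def treeAdj {k : ℕ} (u v : RTV k) : Prop :=
  ((u.1 : ℕ) + 1 = (v.1 : ℕ) ∧ ((v.2 : ℕ) = 2 * (u.2 : ℕ) ∨ (v.2 : ℕ) = 2 * (u.2 : ℕ) + 1)) ∨
  ((v.1 : ℕ) + 1 = (u.1 : ℕ) ∧ ((u.2 : ℕ) = 2 * (v.2 : ℕ) ∨ (u.2 : ℕ) = 2 * (v.2 : ℕ) + 1))

/-- Ring adjacency: at each level `i ≥ 1`, `m` is joined to `m + 1 (mod 2^i)`. -/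
def ringAdj {k : ℕ} (u v : RTV k) : Prop :=
  (u.1 : ℕ) = (v.1 : ℕ) ∧ 1 ≤ (u.1 : ℕ) ∧
    ((v.2 : ℕ) = ((u.2 : ℕ) + 1) % 2 ^ (u.1 : ℕ) ∨ (u.2 : ℕ) = ((v.2 : ℕ) + 1) % 2 ^ (v.1 : ℕ))

lemma ringAdj_no_loop {i m : ℕ} (hm : m < 2 ^ i) (hi : 1 ≤ i) : m ≠ (m + 1) % 2 ^ i := by
  have h2 : 2 ≤ 2 ^ i := by
    calc 2 = 2 ^ 1 := by norm_num
    _ ≤ 2 ^ i := Nat.pow_le_pow_right (by norm_num) hi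
  intro h
  rcases Nat.lt_or_ge (m + 1) (2 ^ i) with hlt | hge
  · rw [Nat.mod_eq_of_lt hlt] at h; omega
  · have he : m + 1 = 2 ^ i := by omega
    rw [he, Nat.mod_self] at h; omega

/-- The ringed tree `RT(k)`: the fully binary tree with `k` levels, with the vertices of each
level `i ≥ 1` additionally connected into a ring. -/
def ringedTree (k : ℕ) : SimpleGraph (RTV k) where
  Adj u v := treeAdj u v ∨ ringAdj u v
  symm := ⟨by
    rintro u v (h | ⟨h1, h2, h3⟩)
    · exact Or.inl (Or.symm h)
    · exact Or.inr ⟨h1.symm, h1 ▸ h2, Or.symm h3⟩⟩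
  loopless := ⟨by
    rintro u ((⟨h1, _⟩ | ⟨h1, _⟩) | ⟨_, h2, (h3 | h3)⟩)
    · omega
    · omega
    · exact ringAdj_no_loop u.2.isLt h2 h3
    · exact ringAdj_no_loop u.2.isLt h2 h3⟩

/-- Cyclic distance on a ring with `N` vertices: `min(|a-b|, N - |a-b|)`. -/
def cycDist (N a b : ℕ) : ℕ := min (Nat.dist a b) (N - Nat.dist a b)

/-- Ring distance `d_R(u,v)` of two vertices of a ringed tree on the same level. -/
def rtRingDist {k : ℕ} (u v : RTV k) : ℕ := cycDist (2 ^ (u.1 : ℕ)) (u.2 : ℕ) (v.2 : ℕ)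

/-- The parent of a vertex `m` at level `i ≥ 1` is `⌊m/2⌋` at level `i - 1`. -/
def rtParent {k : ℕ} (u : RTV k) (h : 1 ≤ (u.1 : ℕ)) : RTV k :=
  ⟨⟨(u.1 : ℕ) - 1, Nat.lt_of_le_of_lt (Nat.sub_le _ 1) u.1.isLt⟩,
   ⟨(u.2 : ℕ) / 2, by
      have h1 : (u.2 : ℕ) < 2 ^ (u.1 : ℕ) := u.2.isLt
      have h2 : 2 ^ ((u.1 : ℕ) - 1) * 2 = 2 ^ (u.1 : ℕ) := by
        rw [← pow_succ]; congr 1; omega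
      show (u.2 : ℕ) / 2 < 2 ^ ((u.1 : ℕ) - 1)
      exact Nat.div_lt_of_lt_mul (by omega)⟩⟩

open MeasureTheory
open scoped ENNReal

/-- The leaf of `RT(k+1)` numbered `m` (level `k`, the outermost level). -/
def leafE (k : ℕ) (m : Fin (2 ^ k)) : RTV (k + 1) := ⟨⟨k, Nat.lt_succ_self k⟩, m⟩

/-- The random ringed tree graph determined by the long-range choices `τ` of the leaves:
the ringed tree `RT(k+1)` together with, for each leaf `m`, the long-range edge
`(m, τ m)` on the outermost level. -/
def rrtGraph (k : ℕ) (τ : Fin (2 ^ k) → Fin (2 ^ k)) : SimpleGraph (RTV (k + 1)) where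
  Adj u v := (ringedTree (k + 1)).Adj u v ∨
    (u ≠ v ∧ ∃ m : Fin (2 ^ k),
      (u = leafE k m ∧ v = leafE k (τ m)) ∨ (v = leafE k m ∧ u = leafE k (τ m)))
  symm := ⟨by
    rintro u v (h | ⟨hne, m, hm⟩)
    · exact Or.inl ((ringedTree (k + 1)).adj_symm h)
    · exact Or.inr ⟨hne.symm, m, Or.symm hm⟩⟩
  loopless := ⟨by
    rintro u (h | ⟨hne, _⟩)
    · exact (ringedTree (k + 1)).irrefl h
    · exact hne rfl⟩

/-- Unnormalized weight with which leaf `v` chooses leaf `u` as its long-range contact: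
`g u v`, and `0` for `u = v`. -/
noncomputable def leafWeight (k : ℕ) (g : Fin (2 ^ k) → Fin (2 ^ k) → ℝ)
    (v u : Fin (2 ^ k)) : ℝ≥0∞ :=
  if u = v then 0 else ENNReal.ofReal (g u v)

/-- The law of the long-range choices of the leaves in the random (ringed) tree model:
independently for each leaf `v`, a leaf `u ≠ v` is chosen with probability
`g(u,v) / Σ_{u' ≠ v} g(u',v)`. -/
noncomputable def leafChoiceMeasure (k : ℕ) (g : Fin (2 ^ k) → Fin (2 ^ k) → ℝ) :
    Measure (Fin (2 ^ k) → Fin (2 ^ k)) :=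
  Measure.pi fun v =>
    (∑ u : Fin (2 ^ k), leafWeight k g v u)⁻¹ •
      ∑ u : Fin (2 ^ k), leafWeight k g v u • Measure.dirac u

/-- The height `h(a,b)` of the lowest common ancestor of the leaves numbered `a` and `b`:
the least `t` with `⌊a/2^t⌋ = ⌊b/2^t⌋`, i.e. the number of levels between the leaves and
their lowest common ancestor. -/
def lcaHeight (a b : ℕ) : ℕ :=
  Nat.find (p := fun t => a / 2 ^ t = b / 2 ^ t)
    ⟨a + b, by
      have ha : a < 2 ^ (a + b) := lt_of_le_of_lt (Nat.le_add_right a b) Nat.lt_two_pow_self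
      have hb : b < 2 ^ (a + b) := lt_of_le_of_lt (Nat.le_add_left b a) Nat.lt_two_pow_self
      simp [Nat.div_eq_of_lt ha, Nat.div_eq_of_lt hb]⟩

/-!
Every vertex lies within distance `k` of the root, so all distances are at most `2k` and
`δ ≤ 2k = O(log n)`.

For the lower bound take `m = ⌊k / M⌋` with `M = 6 (⌈α⌉ + 1)`. A leaf picks a contact at ring
distance at least `2^(3m)` with probability at least `1 / (3 · 2^((3m+1)⌈α⌉))`, which is much
larger than `2^(-k/2)`; as the `2^k` leaves choose independently, with high probability some leaf
`a` has such a long-range edge `a — b`. Let `P`, `Q` be the `m`-th ancestors of `b` and `a`. In the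
quadruple `(a, root, P, Q)` we have `d(a, root) + d(P, Q) ≥ k + 2m`, while the other two pair sums
are at most `k + 1`. Indeed a path from `P` to `Q` of length `< 2m` can neither reach the leaves
(the only level with long-range edges) nor climb `m` levels, and inside that band of levels every
edge moves the leftmost leaf below its endpoint by at most `2^(2m-1)` along the leaf ring: too
little to cover the ring distance `≈ 2^(3m)`. Hence `δ ≥ m - 1/2 = Ω(log n)`.
-/

open Filter

theorem SimpleGraph.Walk.le_length_mul_of_dart_le {V : Type*} {G : SimpleGraph V}
    (D : V → V → ℕ) (hD : ∀ a, D a a = 0) (htri : ∀ a b c, D a c ≤ D a b + D b c) {c : ℕ}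
    {u v : V} (p : G.Walk u v) (hp : ∀ d ∈ p.darts, D d.fst d.snd ≤ c) :
    D u v ≤ p.length * c := by
  induction p with
  | nil => simp [hD]
  | @cons a b _ h q ih =>
    have hab : D a b ≤ c := hp ⟨(a, b), h⟩ (by simp)
    have hq := ih fun d hd => hp d (by simp [hd])
    rw [SimpleGraph.Walk.length_cons, add_mul, one_mul]
    exact (htri a b _).trans (by omega)

section FourPoint

variable {V : Type*} (G : SimpleGraph V)

lemma le_deltaFour {u v w x : V} {s t : ℝ}
    (h1 : s + t ≤ (G.dist u v : ℝ) + G.dist w x) (h2 : (G.dist u x : ℝ) + G.dist v w ≤ s)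
    (h3 : (G.dist u w : ℝ) + G.dist v x ≤ s) : t / 2 ≤ deltaFour G u v w x := by
  simp only [deltaFour, max_def, min_def]
  split_ifs <;> linarith

lemma deltaFour_le {D : ℝ} (hD : ∀ a b, (G.dist a b : ℝ) ≤ D) (u v w x : V) :
    deltaFour G u v w x ≤ D := by
  have h0 (a b : V) : (0 : ℝ) ≤ G.dist a b := Nat.cast_nonneg _
  simp only [deltaFour, max_def, min_def]
  split_ifs <;> linarith [hD u v, hD w x, hD u x, hD v w, hD u w, hD v x,
    h0 u v, h0 w x, h0 u x, h0 v w, h0 u w, h0 v x]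

lemma deltaFour_le_hyperbolicity [Finite V] (u v w x : V) :
    deltaFour G u v w x ≤ hyperbolicity G :=
  le_ciSup_of_le (Set.finite_range _).bddAbove u <|
    le_ciSup_of_le (Set.finite_range _).bddAbove v <|
      le_ciSup_of_le (Set.finite_range _).bddAbove w <|
        le_ciSup_of_le (Set.finite_range _).bddAbove x le_rfl

lemma hyperbolicity_le [Nonempty V] {B : ℝ} (hB : ∀ u v w x, deltaFour G u v w x ≤ B) :
    hyperbolicity G ≤ B :=
  ciSup_le fun u => ciSup_le fun v => ciSup_le fun w => ciSup_le fun x => hB u v w x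

end FourPoint

section WeightedDirac

variable {ι : Type*} [Fintype ι] [MeasurableSpace ι] [MeasurableSingletonClass ι] (w : ι → ℝ≥0∞)

noncomputable def weightedDirac : Measure ι :=
  (∑ u, w u)⁻¹ • ∑ u, w u • Measure.dirac u

lemma weightedDirac_apply (s : Finset ι) :
    weightedDirac w s = (∑ u, w u)⁻¹ * ∑ u ∈ s, w u := by
  classical
  simp [weightedDirac, Measure.dirac_apply, Set.indicator_apply, Finset.sum_ite_mem]

lemma isProbabilityMeasure_weightedDirac (h0 : ∑ u, w u ≠ 0) (htop : ∑ u, w u ≠ ⊤) :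
    IsProbabilityMeasure (weightedDirac w) :=
  ⟨by rw [← Finset.coe_univ, weightedDirac_apply]; exact ENNReal.inv_mul_cancel h0 htop⟩

lemma inv_le_weightedDirac_apply {s : Finset ι} {C : ℝ≥0∞} (hC : ∑ u, w u ≤ C * ∑ u ∈ s, w u)
    (h0 : ∑ u ∈ s, w u ≠ 0) (htop : ∑ u ∈ s, w u ≠ ⊤) : C⁻¹ ≤ weightedDirac w s := by
  rw [weightedDirac_apply]
  calc C⁻¹ = (C * ∑ u ∈ s, w u)⁻¹ * ∑ u ∈ s, w u := by
        rw [ENNReal.mul_inv (Or.inr htop) (Or.inr h0), mul_assoc, ENNReal.inv_mul_cancel h0 htop,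
          mul_one]
    _ ≤ _ := mul_le_mul_left (ENNReal.inv_le_inv.mpr hC) _

end WeightedDirac

lemma tendsto_one_sub_inv_pow_nhds_zero {C n : ℕ → ℕ} (hC : ∀ k, 0 < C k)
    (h : Tendsto (fun k => (n k : ℝ) / C k) atTop atTop) :
    Tendsto (fun k => (1 - (C k : ℝ≥0∞)⁻¹) ^ n k) atTop (nhds 0) := by
  have hq (k : ℕ) : 0 ≤ 1 - (C k : ℝ)⁻¹ :=
    sub_nonneg.mpr (inv_le_one_of_one_le₀ (by exact_mod_cast hC k))
  have heq (k : ℕ) :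
      (1 - (C k : ℝ≥0∞)⁻¹) ^ n k = ENNReal.ofReal ((1 - (C k : ℝ)⁻¹) ^ n k) := by
    rw [ENNReal.ofReal_pow (hq k), ENNReal.ofReal_sub _ (by positivity), ENNReal.ofReal_one,
      ENNReal.ofReal_inv_of_pos (by exact_mod_cast hC k), ENNReal.ofReal_natCast]
  simp_rw [heq]
  rw [← ENNReal.ofReal_zero]
  refine ENNReal.tendsto_ofReal (tendsto_of_tendsto_of_tendsto_of_le_of_le tendsto_const_nhds
    (Real.tendsto_exp_neg_atTop_nhds_zero.comp h) (fun k => pow_nonneg (hq k) _) fun k => ?_)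
  calc (1 - (C k : ℝ)⁻¹) ^ n k ≤ Real.exp (-(C k : ℝ)⁻¹) ^ n k :=
        pow_le_pow_left₀ (hq k) (Real.one_sub_le_exp_neg _) _
    _ = Real.exp (-((n k : ℝ) / C k)) := by rw [← Real.exp_nat_mul]; ring_nf

namespace RRT

section CycDist

variable {N a b c : ℕ}

lemma cycDist_self (N a : ℕ) : cycDist N a a = 0 := by
  simp [cycDist]

lemma cycDist_comm (N a b : ℕ) : cycDist N a b = cycDist N b a := by
  simp only [cycDist, Nat.dist_comm]

lemma cycDist_le_dist (N a b : ℕ) : cycDist N a b ≤ Nat.dist a b :=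
  min_le_left _ _

lemma cycDist_triangle (ha : a < N) (hb : b < N) (hc : c < N) :
    cycDist N a c ≤ cycDist N a b + cycDist N b c := by
  simp only [cycDist, Nat.dist]; omega

lemma cycDist_pos (ha : a < N) (hb : b < N) (hne : a ≠ b) : 0 < cycDist N a b := by
  simp only [cycDist, Nat.dist]; omega

lemma cycDist_add_mod (ha : a < N) (hd : 2 * b ≤ N) : cycDist N a ((a + b) % N) = b := by
  rcases Nat.lt_or_ge (a + b) N with h | h
  · rw [Nat.mod_eq_of_lt h]
    simp only [cycDist, Nat.dist]; omega
  · rw [Nat.mod_eq_sub_mod h, Nat.mod_eq_of_lt (by omega)]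
    simp only [cycDist, Nat.dist]; omega

lemma cycDist_fin_eq_min [NeZero N] (a b : Fin N) :
    cycDist N a b = min (a - b : Fin N).val (b - a : Fin N).val := by
  rcases lt_trichotomy a b with h | rfl | h
  · rw [Fin.coe_sub_iff_lt.mpr h, Fin.coe_sub_iff_le.mpr h.le]
    have : (a : ℕ) < b := h
    simp only [cycDist, Nat.dist]; omega
  · simp [cycDist]
  · rw [Fin.coe_sub_iff_lt.mpr h, Fin.coe_sub_iff_le.mpr h.le]
    have : (b : ℕ) < a := h
    simp only [cycDist, Nat.dist]; omega

end CycDist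

variable {k : ℕ} {τ : Fin (2 ^ k) → Fin (2 ^ k)}

lemma rtv_ext {u v : RTV k} (h1 : (u.1 : ℕ) = v.1) (h2 : (u.2 : ℕ) = v.2) : u = v := by
  obtain ⟨⟨i, hi⟩, ⟨m, hm⟩⟩ := u
  obtain ⟨⟨j, hj⟩, ⟨n, hn⟩⟩ := v
  simp only at h1 h2
  subst h1 h2
  rfl

def root (k : ℕ) : RTV (k + 1) := ⟨⟨0, k.succ_pos⟩, ⟨0, Nat.one_le_two_pow⟩⟩

def ancestor (u : RTV (k + 1)) (t : ℕ) : RTV (k + 1) :=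
  ⟨⟨u.1 - t, by omega⟩, ⟨u.2 / 2 ^ t, by
    refine Nat.div_lt_of_lt_mul (u.2.isLt.trans_le ?_)
    rw [← pow_add]
    exact Nat.pow_le_pow_right two_pos (by dsimp only; omega)⟩⟩

@[simp] lemma ancestor_fst (u : RTV (k + 1)) (t : ℕ) : ((ancestor u t).1 : ℕ) = u.1 - t := rfl

@[simp] lemma ancestor_snd (u : RTV (k + 1)) (t : ℕ) : ((ancestor u t).2 : ℕ) = u.2 / 2 ^ t := rfl

lemma ancestor_zero (u : RTV (k + 1)) : ancestor u 0 = u :=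
  rtv_ext (by simp) (by simp)

lemma ancestor_fst_eq_root (u : RTV (k + 1)) : ancestor u u.1 = root k :=
  rtv_ext (by simp [root]) (by simp [root, Nat.div_eq_of_lt u.2.isLt])

lemma adj_ancestor_succ (u : RTV (k + 1)) {t : ℕ} (ht : t < u.1) :
    (rrtGraph k τ).Adj (ancestor u t) (ancestor u (t + 1)) := by
  have h2 : (u.2 : ℕ) / 2 ^ (t + 1) = u.2 / 2 ^ t / 2 := by
    rw [Nat.div_div_eq_div_mul, pow_succ]
  refine Or.inl (Or.inl (Or.inr ⟨?_, ?_⟩))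
  · simp only [ancestor_fst]; omega
  · simp only [ancestor_snd, h2]; omega

lemma reachable_ancestor (u : RTV (k + 1)) {t : ℕ} (ht : t ≤ u.1) :
    (rrtGraph k τ).Reachable u (ancestor u t) := by
  induction t with
  | zero => rw [ancestor_zero]
  | succ t ih => exact (ih (by omega)).trans (adj_ancestor_succ u ht).reachable

lemma rrtGraph_connected : (rrtGraph k τ).Connected := by
  have hroot (u : RTV (k + 1)) : (rrtGraph k τ).Reachable u (root k) := by
    simpa [ancestor_fst_eq_root] using reachable_ancestor (τ := τ) u le_rfl
  have : Nonempty (RTV (k + 1)) := ⟨root k⟩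
  exact ⟨fun u v => (hroot u).trans (hroot v).symm⟩

lemma dist_ancestor_le (u : RTV (k + 1)) {t : ℕ} (ht : t ≤ u.1) :
    (rrtGraph k τ).dist u (ancestor u t) ≤ t := by
  induction t with
  | zero => simp [ancestor_zero]
  | succ t ih =>
    calc (rrtGraph k τ).dist u (ancestor u (t + 1))
        ≤ (rrtGraph k τ).dist u (ancestor u t) +
            (rrtGraph k τ).dist (ancestor u t) (ancestor u (t + 1)) :=
          rrtGraph_connected.dist_triangle
      _ ≤ t + 1 := by
          rw [SimpleGraph.dist_eq_one_iff_adj.mpr (adj_ancestor_succ u ht)]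
          exact Nat.add_le_add_right (ih (by omega)) 1

lemma dist_root_le (u : RTV (k + 1)) : (rrtGraph k τ).dist u (root k) ≤ u.1 := by
  simpa [ancestor_fst_eq_root] using dist_ancestor_le (τ := τ) u le_rfl

lemma dist_le_two_mul (u v : RTV (k + 1)) : (rrtGraph k τ).dist u v ≤ 2 * k := by
  have huv := rrtGraph_connected.dist_triangle (u := u) (v := root k) (w := v) (G := rrtGraph k τ)
  have hu := dist_root_le (τ := τ) u
  have hv := dist_root_le (τ := τ) v
  rw [SimpleGraph.dist_comm (u := root k)] at huv
  omega

lemma natDist_fst_le_one_of_adj {u v : RTV (k + 1)} (h : (rrtGraph k τ).Adj u v) :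
    Nat.dist u.1 v.1 ≤ 1 := by
  rcases h with ((h | h) | ⟨h, -⟩) | ⟨-, m, ⟨rfl, rfl⟩ | ⟨rfl, rfl⟩⟩ <;>
    simp only [Nat.dist, leafE] at * <;> omega

lemma natDist_fst_le_length {u v : RTV (k + 1)} (p : (rrtGraph k τ).Walk u v) :
    Nat.dist u.1 v.1 ≤ p.length := by
  simpa using p.le_length_mul_of_dart_le (fun a b => Nat.dist a.1 b.1) (fun a => Nat.dist_self _)
    (fun a b c => Nat.dist.triangle_inequality _ _ _) fun d _ => natDist_fst_le_one_of_adj d.adj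

lemma natDist_fst_le_dist (u v : RTV (k + 1)) : Nat.dist u.1 v.1 ≤ (rrtGraph k τ).dist u v := by
  obtain ⟨p, hp⟩ := rrtGraph_connected.exists_walk_length_eq_dist u v
  exact hp ▸ natDist_fst_le_length p

lemma natDist_fst_add_le_length {u v z : RTV (k + 1)} (p : (rrtGraph k τ).Walk u v)
    (hz : z ∈ p.support) : Nat.dist u.1 z.1 + Nat.dist z.1 v.1 ≤ p.length := by
  rw [← p.take_spec hz, SimpleGraph.Walk.length_append]
  exact Nat.add_le_add (natDist_fst_le_length _) (natDist_fst_le_length _)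

/-- The leftmost leaf below `u`. -/
def angle (u : RTV (k + 1)) : ℕ := u.2 * 2 ^ (k - u.1)

lemma angle_lt (u : RTV (k + 1)) : angle u < 2 ^ k := by
  calc angle u < 2 ^ (u.1 : ℕ) * 2 ^ (k - u.1) :=
        Nat.mul_lt_mul_of_pos_right u.2.isLt (by positivity)
    _ = 2 ^ k := by rw [← pow_add]; congr 1; omega

lemma natDist_angle_ancestor_leafE_lt (a : Fin (2 ^ k)) {t : ℕ} (ht : t ≤ k) :
    Nat.dist (angle (ancestor (leafE k a) t)) a < 2 ^ t := by
  have h : angle (ancestor (leafE k a) t) = a / 2 ^ t * 2 ^ t := by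
    simp [angle, leafE, Nat.sub_sub_self ht]
  rw [h, Nat.dist_eq_sub_of_le (Nat.div_mul_le_self _ _), ← Nat.mod_eq_sub_div_mul]
  exact Nat.mod_lt _ (by positivity)

lemma natDist_angle_of_parent {u v : RTV (k + 1)} (h1 : (u.1 : ℕ) + 1 = v.1)
    (h2 : (v.2 : ℕ) = 2 * u.2 ∨ (v.2 : ℕ) = 2 * u.2 + 1) :
    Nat.dist (angle u) (angle v) ≤ 2 ^ (k - v.1) := by
  have hu : angle u = 2 * u.2 * 2 ^ (k - v.1) := by
    rw [angle, show k - (u.1 : ℕ) = k - v.1 + 1 by omega, pow_succ]; ring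
  rw [hu, angle, Nat.dist_mul_right]
  refine (Nat.mul_le_mul_right _ (?_ : Nat.dist _ _ ≤ 1)).trans (one_mul _).le
  rcases h2 with h2 | h2 <;> rw [h2] <;> unfold Nat.dist <;> omega

lemma cycDist_angle_of_ring_succ {u v : RTV (k + 1)} (h1 : (u.1 : ℕ) = v.1)
    (h2 : (v.2 : ℕ) = (u.2 + 1) % 2 ^ (u.1 : ℕ)) :
    cycDist (2 ^ k) (angle u) (angle v) ≤ 2 ^ (k - u.1) := by
  have hv : angle v = (v.2 : ℕ) * 2 ^ (k - u.1) := by rw [angle, h1]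
  rcases Nat.lt_or_ge ((u.2 : ℕ) + 1) (2 ^ (u.1 : ℕ)) with hlt | hge
  · rw [Nat.mod_eq_of_lt hlt] at h2
    refine (cycDist_le_dist _ _ _).trans ?_
    have h1 : Nat.dist (u.2 : ℕ) (u.2 + 1) = 1 := by unfold Nat.dist; omega
    rw [hv, h2, angle, Nat.dist_mul_right, h1, one_mul]
  · have hsplit : (u.2 + 1 : ℕ) * 2 ^ (k - u.1) = 2 ^ k := by
      rw [show (u.2 : ℕ) + 1 = 2 ^ (u.1 : ℕ) by have := u.2.isLt; omega, ← pow_add]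
      congr 1; omega
    rw [h2, show (u.2 : ℕ) + 1 = 2 ^ (u.1 : ℕ) by have := u.2.isLt; omega, Nat.mod_self,
      zero_mul] at hv
    rw [hv, cycDist, Nat.dist_zero_right, ← hsplit, angle, add_mul, one_mul]
    exact (min_le_right _ _).trans (by rw [Nat.add_sub_cancel_left])

lemma cycDist_angle_le_of_adj {u v : RTV (k + 1)} (h : (ringedTree (k + 1)).Adj u v) {l : ℕ}
    (hu : l ≤ u.1) (hv : l ≤ v.1) : cycDist (2 ^ k) (angle u) (angle v) ≤ 2 ^ (k - l) := by
  have hl (w : RTV (k + 1)) (hw : l ≤ w.1) : 2 ^ (k - (w.1 : ℕ)) ≤ 2 ^ (k - l) :=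
    Nat.pow_le_pow_right two_pos (by omega)
  rcases h with (⟨h1, h2⟩ | ⟨h1, h2⟩) | ⟨h1, -, h3 | h3⟩
  · exact (cycDist_le_dist _ _ _).trans ((natDist_angle_of_parent h1 h2).trans (hl v hv))
  · rw [cycDist_comm]
    exact (cycDist_le_dist _ _ _).trans ((natDist_angle_of_parent h1 h2).trans (hl u hu))
  · exact (cycDist_angle_of_ring_succ h1 h3).trans (hl u hu)
  · rw [cycDist_comm]
    exact (cycDist_angle_of_ring_succ h1.symm h3).trans (hl v hv)

lemma ringedTree_adj_of_rrtGraph_adj {u v : RTV (k + 1)} (h : (rrtGraph k τ).Adj u v)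
    (hu : (u.1 : ℕ) ≠ k) : (ringedTree (k + 1)).Adj u v := by
  rcases h with h | ⟨-, m, ⟨rfl, -⟩ | ⟨-, rfl⟩⟩
  · exact h
  all_goals exact absurd rfl hu

lemma le_dist_of_cycDist_angle {m : ℕ} (hmk : 2 * m ≤ k) {P Q : RTV (k + 1)}
    (hP : (P.1 : ℕ) = k - m) (hQ : (Q.1 : ℕ) = k - m)
    (h : (2 * m - 1) * 2 ^ (2 * m - 1) < cycDist (2 ^ k) (angle P) (angle Q)) :
    2 * m ≤ (rrtGraph k τ).dist P Q := by
  obtain ⟨p, hp⟩ := rrtGraph_connected.exists_walk_length_eq_dist P Q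
  rw [← hp]
  by_contra! hlt
  by_cases hout : ∃ z ∈ p.support, (z.1 : ℕ) = k ∨ (z.1 : ℕ) + 2 * m ≤ k
  · obtain ⟨z, hz, hzk⟩ := hout
    have := natDist_fst_add_le_length p hz
    unfold Nat.dist at this
    omega
  push Not at hout
  have hstep : ∀ d ∈ p.darts, cycDist (2 ^ k) (angle d.fst) (angle d.snd) ≤ 2 ^ (2 * m - 1) := by
    intro d hd
    have h1 := hout _ (p.dart_fst_mem_support_of_mem_darts hd)
    have h2 := hout _ (p.dart_snd_mem_support_of_mem_darts hd)
    have := cycDist_angle_le_of_adj (ringedTree_adj_of_rrtGraph_adj d.adj h1.1)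
      (l := k + 1 - 2 * m) (by omega) (by omega)
    rwa [show k - (k + 1 - 2 * m) = 2 * m - 1 by omega] at this
  have hwalk := p.le_length_mul_of_dart_le (fun a b => cycDist (2 ^ k) (angle a) (angle b))
    (fun a => cycDist_self _ _)
    (fun a b c => cycDist_triangle (angle_lt a) (angle_lt b) (angle_lt c)) hstep
  have := Nat.mul_le_mul_right (2 ^ (2 * m - 1)) (show p.length ≤ 2 * m - 1 by omega)
  omega

lemma hyperbolicity_rrtGraph_le : hyperbolicity (rrtGraph k τ) ≤ 2 * k := by
  have : Nonempty (RTV (k + 1)) := ⟨root k⟩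
  exact hyperbolicity_le _ <| deltaFour_le _ fun a b => by exact_mod_cast dist_le_two_mul a b

lemma two_mul_sub_one_mul_pow_add_le {m : ℕ} (hm : 1 ≤ m) :
    (2 * m - 1) * 2 ^ (2 * m - 1) + 2 * 2 ^ m ≤ 2 ^ (3 * m) := by
  obtain ⟨n, rfl⟩ := Nat.exists_eq_add_of_le' hm
  have hn : n + 1 ≤ 2 ^ n := Nat.lt_two_pow_self
  have h1 : 2 ^ (2 * (n + 1) - 1) = 2 * (2 ^ n) ^ 2 := by
    rw [← pow_mul, ← pow_succ']; congr 1; omega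
  have h3 : 2 ^ (3 * (n + 1)) = 8 * (2 ^ n) ^ 3 := by
    rw [← pow_mul, show 8 = 2 ^ 3 by rfl, ← pow_add]; congr 1; ring
  rw [h1, h3, pow_succ 2 n, show 2 * (n + 1) - 1 = 2 * n + 1 by omega]
  generalize 2 ^ n = q at *
  have hq : q ≤ q ^ 3 := Nat.le_self_pow (by norm_num) q
  nlinarith [Nat.mul_le_mul_right (q ^ 2) hn]

lemma le_dist_ancestor_leafE {m : ℕ} (hm : 1 ≤ m) (hmk : 2 * m ≤ k) {a b : Fin (2 ^ k)}
    (hab : 2 ^ (3 * m) ≤ cycDist (2 ^ k) a b) :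
    2 * m ≤ (rrtGraph k τ).dist (ancestor (leafE k b) m) (ancestor (leafE k a) m) := by
  set P := ancestor (leafE k b) m
  set Q := ancestor (leafE k a) m
  refine le_dist_of_cycDist_angle hmk rfl rfl ?_
  have hP := natDist_angle_ancestor_leafE_lt b (t := m) (by omega)
  have hQ := natDist_angle_ancestor_leafE_lt a (t := m) (by omega)
  have htri : cycDist (2 ^ k) a b ≤ cycDist (2 ^ k) (angle Q) a +
      cycDist (2 ^ k) (angle P) (angle Q) + cycDist (2 ^ k) (angle P) b :=
    calc cycDist (2 ^ k) a b
        ≤ cycDist (2 ^ k) a (angle Q) + cycDist (2 ^ k) (angle Q) b :=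
          cycDist_triangle a.isLt (angle_lt Q) b.isLt
      _ ≤ cycDist (2 ^ k) a (angle Q) +
          (cycDist (2 ^ k) (angle Q) (angle P) + cycDist (2 ^ k) (angle P) b) :=
          Nat.add_le_add_left (cycDist_triangle (angle_lt Q) (angle_lt P) b.isLt) _
      _ = _ := by rw [cycDist_comm _ a, cycDist_comm _ (angle Q) (angle P), add_assoc]
  have hQa := (cycDist_le_dist (2 ^ k) (angle Q) a).trans_lt hQ
  have hPa := (cycDist_le_dist (2 ^ k) (angle P) b).trans_lt hP
  have := two_mul_sub_one_mul_pow_add_le hm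
  omega

lemma hyperbolicity_rrtGraph_ge {m : ℕ} (hm : 1 ≤ m) (hmk : 2 * m ≤ k) (a : Fin (2 ^ k))
    (ha : 2 ^ (3 * m) ≤ cycDist (2 ^ k) a (τ a)) :
    (m : ℝ) - 1 / 2 ≤ hyperbolicity (rrtGraph k τ) := by
  set G := rrtGraph k τ
  set A := leafE k a
  set B := leafE k (τ a)
  set P := ancestor B m
  set Q := ancestor A m
  have hAR : k ≤ G.dist A (root k) := by
    simpa [A, leafE, root, Nat.dist_zero_right] using natDist_fst_le_dist (τ := τ) A (root k)
  have hRP : G.dist (root k) P ≤ k - m := G.dist_comm ▸ dist_root_le P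
  have hRQ : G.dist (root k) Q ≤ k - m := G.dist_comm ▸ dist_root_le Q
  have hAQ : G.dist A Q ≤ m := dist_ancestor_le A (by simp [A, leafE]; omega)
  have hne : (a : ℕ) ≠ τ a := fun h => by
    rw [h, cycDist_self] at ha
    exact absurd ha (Nat.two_pow_pos _).not_ge
  have hAB : G.Adj A B :=
    Or.inr ⟨fun h => hne (congrArg (fun z : RTV (k + 1) => (z.2 : ℕ)) h), a, Or.inl ⟨rfl, rfl⟩⟩
  have hAP : G.dist A P ≤ m + 1 := by
    have htri : G.dist A P ≤ G.dist A B + G.dist B P := rrtGraph_connected.dist_triangle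
    have hBP : G.dist B P ≤ m := dist_ancestor_le B (by simp [B, leafE]; omega)
    rw [SimpleGraph.dist_eq_one_iff_adj.mpr hAB] at htri
    omega
  have hPQ : 2 * m ≤ G.dist P Q := le_dist_ancestor_leafE hm hmk ha
  have h1 : k + 2 * m ≤ G.dist A (root k) + G.dist P Q := by omega
  have h2 : G.dist A Q + G.dist (root k) P ≤ k + 1 := by omega
  have h3 : G.dist A P + G.dist (root k) Q ≤ k + 1 := by omega
  have hδ := le_deltaFour G (u := A) (v := root k) (w := P) (x := Q) (s := k + 1)
    (t := 2 * m - 1) (by have := (Nat.cast_le (α := ℝ)).mpr h1; push_cast at this; linarith)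
    (by exact_mod_cast h2) (by exact_mod_cast h3)
  calc (m : ℝ) - 1 / 2 = (2 * m - 1) / 2 := by ring
    _ ≤ hyperbolicity G := hδ.trans (deltaFour_le_hyperbolicity G _ _ _ _)

section CycBall

open Fin.NatCast

def cycBall (N T : ℕ) (v : Fin N) : Finset (Fin N) :=
  Finset.univ.filter fun u => cycDist N u v < T

lemma cycDist_add_natCast {N : ℕ} [NeZero N] (v : Fin N) {j : ℕ} (hj : 2 * j ≤ N) :
    cycDist N (v + (j : Fin N) : Fin N) v = j := by
  rw [cycDist_comm, Fin.val_add, Fin.val_natCast, Nat.add_mod_mod]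
  exact cycDist_add_mod v.isLt hj

lemma card_cycBall_le {N : ℕ} [NeZero N] (T : ℕ) (v : Fin N) : (cycBall N T v).card ≤ 2 * T := by
  have hsub : cycBall N T v ⊆ (Finset.range T).image (fun j : ℕ => v + (j : Fin N)) ∪
      (Finset.range T).image (fun j : ℕ => v - (j : Fin N)) := by
    intro u hu
    simp only [cycBall, Finset.mem_filter, Finset.mem_univ, true_and, cycDist_fin_eq_min,
      min_lt_iff] at hu
    simp only [Finset.mem_union, Finset.mem_image, Finset.mem_range]
    rcases hu with hu | hu
    · exact Or.inl ⟨_, hu, by simp⟩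
    · exact Or.inr ⟨_, hu, by simp⟩
  calc (cycBall N T v).card ≤ _ := Finset.card_le_card hsub
    _ ≤ _ := Finset.card_union_le _ _
    _ ≤ T + T := Nat.add_le_add (Finset.card_image_le.trans (Finset.card_range T).le)
        (Finset.card_image_le.trans (Finset.card_range T).le)
    _ = 2 * T := by ring

end CycBall

variable {α : ℝ}

noncomputable def powerLaw (k : ℕ) (α : ℝ) : Fin (2 ^ k) → Fin (2 ^ k) → ℝ :=
  fun u v => ((cycDist (2 ^ k) (u : ℕ) (v : ℕ) : ℕ) : ℝ) ^ (-α)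

lemma one_le_cycDist_of_ne {u v : Fin (2 ^ k)} (h : u ≠ v) : (1 : ℝ) ≤ cycDist (2 ^ k) u v := by
  exact_mod_cast cycDist_pos u.isLt v.isLt (Fin.val_ne_of_ne h)

lemma leafWeight_le_one (hα : 0 ≤ α) (v u : Fin (2 ^ k)) :
    leafWeight k (powerLaw k α) v u ≤ 1 := by
  unfold leafWeight
  split_ifs with h
  · exact zero_le_one
  · exact ENNReal.ofReal_le_one.mpr
      (Real.rpow_le_one_of_one_le_of_nonpos (one_le_cycDist_of_ne h) (neg_nonpos.mpr hα))

lemma leafWeight_ne_top (g : Fin (2 ^ k) → Fin (2 ^ k) → ℝ) (v u : Fin (2 ^ k)) :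
    leafWeight k g v u ≠ ⊤ := by
  unfold leafWeight; split_ifs <;> simp

open Fin.NatCast in
lemma leafWeight_add_one (hk : 1 ≤ k) (v : Fin (2 ^ k)) :
    leafWeight k (powerLaw k α) v (v + 1) = 1 := by
  have hd := cycDist_add_natCast v (j := 1) (by simpa using Nat.pow_le_pow_right two_pos hk)
  rw [Nat.cast_one] at hd
  have hne : v + 1 ≠ v := fun h => by rw [h, cycDist_self] at hd; exact zero_ne_one hd
  simp [leafWeight, powerLaw, hne, hd]

lemma inv_pow_le_leafWeight (hα : 0 ≤ α) {A : ℕ} (hαA : α ≤ A) {v u : Fin (2 ^ k)}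
    (hne : u ≠ v) {D : ℕ} (hD : cycDist (2 ^ k) u v ≤ D) :
    ((D : ℝ≥0∞) ^ A)⁻¹ ≤ leafWeight k (powerLaw k α) v u := by
  have h1 := one_le_cycDist_of_ne hne
  have hD' : (cycDist (2 ^ k) u v : ℝ) ≤ D := by exact_mod_cast hD
  have hDpos : (0 : ℝ) < D := by linarith
  rw [leafWeight, if_neg hne, powerLaw, ← ENNReal.ofReal_natCast, ← ENNReal.ofReal_pow hDpos.le,
    ← ENNReal.ofReal_inv_of_pos (by positivity)]
  refine ENNReal.ofReal_le_ofReal ?_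
  calc ((D : ℝ) ^ A)⁻¹ = (D : ℝ) ^ (-(A : ℝ)) := by
        rw [Real.rpow_neg hDpos.le, Real.rpow_natCast]
    _ ≤ (D : ℝ) ^ (-α) := Real.rpow_le_rpow_of_exponent_le (by linarith) (by linarith)
    _ ≤ _ := Real.rpow_le_rpow_of_nonpos (by linarith) hD' (neg_nonpos.mpr hα)

open Fin.NatCast in
lemma le_sum_leafWeight_compl_cycBall (hα : 0 ≤ α) {A : ℕ} (hαA : α ≤ A) {T : ℕ}
    (hT : 4 * T ≤ 2 ^ k) (v : Fin (2 ^ k)) :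
    (T : ℝ≥0∞) * (((2 * T : ℕ) : ℝ≥0∞) ^ A)⁻¹ ≤
      ∑ u ∈ (cycBall (2 ^ k) T v)ᶜ, leafWeight k (powerLaw k α) v u := by
  set f : ℕ → Fin (2 ^ k) := fun j => v + (j : Fin (2 ^ k))
  have hf (j : ℕ) (hj : j ∈ Finset.Ico T (2 * T)) : cycDist (2 ^ k) (f j) v = j :=
    cycDist_add_natCast v (by rw [Finset.mem_Ico] at hj; omega)
  have hinj : Set.InjOn f (Finset.Ico T (2 * T)) := fun i hi j hj h => by
    rw [← hf i hi, ← hf j hj, h]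
  calc (T : ℝ≥0∞) * (((2 * T : ℕ) : ℝ≥0∞) ^ A)⁻¹
      = ∑ _j ∈ Finset.Ico T (2 * T), (((2 * T : ℕ) : ℝ≥0∞) ^ A)⁻¹ := by
        rw [Finset.sum_const, Nat.card_Ico, nsmul_eq_mul, show 2 * T - T = T by omega]
    _ ≤ ∑ j ∈ Finset.Ico T (2 * T), leafWeight k (powerLaw k α) v (f j) := by
        refine Finset.sum_le_sum fun j hj => inv_pow_le_leafWeight hα hαA (fun h => ?_) ?_
        · have := hf j hj
          rw [h, cycDist_self, Finset.mem_Ico] at *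
          omega
        · rw [hf j hj]; rw [Finset.mem_Ico] at hj; omega
    _ = ∑ u ∈ (Finset.Ico T (2 * T)).image f, leafWeight k (powerLaw k α) v u :=
        (Finset.sum_image hinj).symm
    _ ≤ _ := by
        refine Finset.sum_le_sum_of_subset fun u hu => ?_
        obtain ⟨j, hj, rfl⟩ := Finset.mem_image.mp hu
        simp only [cycBall, Finset.mem_compl, Finset.mem_filter, Finset.mem_univ, true_and,
          hf j hj, not_lt]
        exact (Finset.mem_Ico.mp hj).1

lemma sum_leafWeight_cycBall_le (hα : 0 ≤ α) (T : ℕ) (v : Fin (2 ^ k)) :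
    ∑ u ∈ cycBall (2 ^ k) T v, leafWeight k (powerLaw k α) v u ≤ 2 * T := by
  calc _ ≤ (cycBall (2 ^ k) T v).card • (1 : ℝ≥0∞) :=
        Finset.sum_le_card_nsmul _ _ _ fun u _ => leafWeight_le_one hα v u
    _ ≤ 2 * T := by rw [nsmul_eq_mul, mul_one]; exact_mod_cast card_cycBall_le T v

lemma sum_leafWeight_le_mul_sum_compl_cycBall (hα : 0 ≤ α) {A : ℕ} (hαA : α ≤ A) {T : ℕ}
    (hT : 1 ≤ T) (hTk : 4 * T ≤ 2 ^ k) (v : Fin (2 ^ k)) :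
    ∑ u, leafWeight k (powerLaw k α) v u ≤
      ((3 * (2 * T) ^ A : ℕ) : ℝ≥0∞) *
        ∑ u ∈ (cycBall (2 ^ k) T v)ᶜ, leafWeight k (powerLaw k α) v u := by
  set B := cycBall (2 ^ k) T v
  set S := ∑ u ∈ Bᶜ, leafWeight k (powerLaw k α) v u
  set c : ℝ≥0∞ := ((2 * T : ℕ) : ℝ≥0∞) ^ A
  have hc1 : 1 ≤ c := one_le_pow₀ (by exact_mod_cast (by omega : 1 ≤ 2 * T))
  have hctop : c ≠ ⊤ := ENNReal.pow_ne_top (ENNReal.natCast_ne_top _)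
  rw [← Finset.sum_add_sum_compl B]
  calc ∑ u ∈ B, leafWeight k (powerLaw k α) v u + S ≤ 2 * T + S :=
        add_le_add_left (sum_leafWeight_cycBall_le hα T v) _
    _ = 2 * c * (T * c⁻¹) + S := by
        rw [mul_comm (T : ℝ≥0∞), ← mul_assoc, mul_assoc 2,
          ENNReal.mul_inv_cancel (one_pos.trans_le hc1).ne' hctop, mul_one]
    _ ≤ 2 * c * S + c * S :=
        add_le_add (by gcongr; exact le_sum_leafWeight_compl_cycBall hα hαA hTk v)
          (le_mul_of_one_le_left' hc1)
    _ = _ := by push_cast [c]; ring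

lemma weightedDirac_cycBall_le (hα : 0 ≤ α) {A : ℕ} (hαA : α ≤ A) {T : ℕ} (hT : 1 ≤ T)
    (hTk : 4 * T ≤ 2 ^ k) (v : Fin (2 ^ k)) :
    weightedDirac (leafWeight k (powerLaw k α) v) (cycBall (2 ^ k) T v) ≤
      1 - ((3 * (2 * T) ^ A : ℕ) : ℝ≥0∞)⁻¹ := by
  set w := leafWeight k (powerLaw k α) v
  set B := cycBall (2 ^ k) T v
  have hS0 : ∑ u ∈ Bᶜ, w u ≠ 0 := by
    refine (lt_of_lt_of_le ?_ (le_sum_leafWeight_compl_cycBall hα hαA hTk v)).ne'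
    exact ENNReal.mul_pos (by exact_mod_cast (by omega : T ≠ 0))
      (ENNReal.inv_ne_zero.mpr (ENNReal.pow_ne_top (ENNReal.natCast_ne_top _)))
  have hStop : ∑ u ∈ Bᶜ, w u ≠ ⊤ := ENNReal.sum_ne_top.mpr fun u _ => leafWeight_ne_top _ v u
  have hprob : IsProbabilityMeasure (weightedDirac w) :=
    isProbabilityMeasure_weightedDirac w
      ((pos_iff_ne_zero.mpr hS0).trans_le (Finset.sum_le_sum_of_subset (Finset.subset_univ _))).ne'
      (ENNReal.sum_ne_top.mpr fun u _ => leafWeight_ne_top _ v u)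
  calc weightedDirac w B = weightedDirac w (↑Bᶜ)ᶜ := by rw [Finset.coe_compl, compl_compl]
    _ = 1 - weightedDirac w ↑Bᶜ := prob_compl_eq_one_sub MeasurableSet.of_discrete
    _ ≤ _ := tsub_le_tsub_left (inv_le_weightedDirac_apply w
        (sum_leafWeight_le_mul_sum_compl_cycBall hα hαA hT hTk v) hS0 hStop) 1

lemma isProbabilityMeasure_weightedDirac_leafWeight (hk : 1 ≤ k) (v : Fin (2 ^ k)) :
    IsProbabilityMeasure (weightedDirac (leafWeight k (powerLaw k α) v)) := by
  refine isProbabilityMeasure_weightedDirac _ (fun h => ?_)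
    (ENNReal.sum_ne_top.mpr fun u _ => leafWeight_ne_top _ v u)
  have := Finset.single_le_sum (f := leafWeight k (powerLaw k α) v) (fun _ _ => zero_le)
    (Finset.mem_univ (v + 1))
  rw [h, leafWeight_add_one hk] at this
  exact one_ne_zero (le_antisymm this zero_le)

lemma leafChoiceMeasure_eq_pi (g : Fin (2 ^ k) → Fin (2 ^ k) → ℝ) :
    leafChoiceMeasure k g = Measure.pi fun v => weightedDirac (leafWeight k g v) :=
  rfl

lemma isProbabilityMeasure_leafChoiceMeasure (hk : 1 ≤ k) :
    IsProbabilityMeasure (leafChoiceMeasure k (powerLaw k α)) := by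
  have := isProbabilityMeasure_weightedDirac_leafWeight (α := α) hk
  rw [leafChoiceMeasure_eq_pi]
  infer_instance

def shortChoices (k T : ℕ) : Set (Fin (2 ^ k) → Fin (2 ^ k)) :=
  Set.univ.pi fun v => ↑(cycBall (2 ^ k) T v)

lemma exists_le_cycDist_of_notMem_shortChoices {T : ℕ} {τ : Fin (2 ^ k) → Fin (2 ^ k)}
    (h : τ ∉ shortChoices k T) : ∃ v, T ≤ cycDist (2 ^ k) (τ v) v := by
  simpa [shortChoices, cycBall] using h

lemma leafChoiceMeasure_shortChoices_le (hα : 0 ≤ α) {A : ℕ} (hαA : α ≤ A) {T : ℕ} (hT : 1 ≤ T)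
    (hTk : 4 * T ≤ 2 ^ k) :
    leafChoiceMeasure k (powerLaw k α) (shortChoices k T) ≤
      (1 - ((3 * (2 * T) ^ A : ℕ) : ℝ≥0∞)⁻¹) ^ 2 ^ k := by
  have hk : 1 ≤ k := Nat.one_le_iff_ne_zero.mpr fun h => by subst h; omega
  have := isProbabilityMeasure_weightedDirac_leafWeight (α := α) hk
  rw [leafChoiceMeasure_eq_pi, shortChoices, Measure.pi_pi]
  calc _ ≤ _ ^ (Finset.univ : Finset (Fin (2 ^ k))).card :=
        Finset.prod_le_pow_card _ _ _ fun v _ => weightedDirac_cycBall_le hα hαA hT hTk v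
    _ = _ := by rw [Finset.card_univ, Fintype.card_fin]

lemma tendsto_two_pow_div_atTop (A : ℕ) :
    Tendsto (fun k : ℕ => ((2 ^ k : ℕ) : ℝ) /
      ((3 * (2 * 2 ^ (3 * (k / (6 * (A + 1))))) ^ A : ℕ) : ℝ)) atTop atTop := by
  have hhalf : Tendsto (fun k : ℕ => k / 2 - A) atTop atTop :=
    tendsto_atTop_atTop.2 fun b => ⟨2 * (b + A), fun k hk => by omega⟩
  refine tendsto_atTop_mono' _ ?_
    (((tendsto_pow_atTop_atTop_of_one_lt one_lt_two).comp hhalf).atTop_div_const three_pos)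
  filter_upwards [eventually_ge_atTop (2 * A)] with k hk
  set m := k / (6 * (A + 1))
  have hm : m * (6 * (A + 1)) ≤ k := Nat.div_mul_le_self k _
  have hexp : k / 2 - A + (3 * m + 1) * A ≤ k := by
    have : 2 * ((3 * m + 1) * A) ≤ k + 2 * A := by nlinarith
    omega
  have hnat : 2 ^ (k / 2 - A) * 2 ^ ((3 * m + 1) * A) ≤ 2 ^ k := by
    rw [← pow_add]; exact Nat.pow_le_pow_right two_pos hexp
  have hreal := (Nat.cast_le (α := ℝ)).mpr hnat
  push_cast at hreal
  rw [Function.comp_apply, ← pow_succ', ← pow_mul, div_le_div_iff₀ (by positivity) (by positivity)]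
  push_cast
  nlinarith

lemma tendsto_leafChoiceMeasure_shortChoices (hα : 0 ≤ α) {A : ℕ} (hαA : α ≤ A) :
    Tendsto (fun k => leafChoiceMeasure k (powerLaw k α)
      (shortChoices k (2 ^ (3 * (k / (6 * (A + 1))))))) atTop (nhds 0) := by
  refine tendsto_of_tendsto_of_tendsto_of_le_of_le' tendsto_const_nhds
    (tendsto_one_sub_inv_pow_nhds_zero (fun k => by positivity) (tendsto_two_pow_div_atTop A))
    (Eventually.of_forall fun _ => zero_le) ?_
  filter_upwards [eventually_ge_atTop (6 * (A + 1))] with k hk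
  refine leafChoiceMeasure_shortChoices_le hα hαA Nat.one_le_two_pow ?_
  have h6 : 6 * (k / (6 * (A + 1))) ≤ k :=
    (Nat.mul_le_mul_right _ (by omega)).trans (Nat.mul_comm _ _ ▸ Nat.div_mul_le_self k _)
  calc 4 * 2 ^ (3 * (k / (6 * (A + 1)))) = 2 ^ (3 * (k / (6 * (A + 1))) + 2) := by ring
    _ ≤ 2 ^ k := Nat.pow_le_pow_right two_pos (by omega)

lemma log_card_le (k : ℕ) : Real.log ((2 ^ (k + 1) - 1 : ℕ) : ℝ) ≤ k + 1 := by
  have hpos : (0 : ℝ) < ((2 ^ (k + 1) - 1 : ℕ) : ℝ) := by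
    have := Nat.one_le_two_pow (n := k); rw [pow_succ]; exact_mod_cast (by omega)
  calc Real.log ((2 ^ (k + 1) - 1 : ℕ) : ℝ) ≤ Real.log (2 ^ (k + 1)) :=
        Real.log_le_log hpos (by exact_mod_cast Nat.sub_le _ _)
    _ = (k + 1) * Real.log 2 := by rw [Real.log_pow]; push_cast; ring
    _ ≤ k + 1 := mul_le_of_le_one_right (by positivity) (by linarith [Real.log_two_lt_d9])

lemma mul_log_two_le_log_card (k : ℕ) : k * Real.log 2 ≤ Real.log ((2 ^ (k + 1) - 1 : ℕ) : ℝ) := by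
  rw [← Real.log_pow]
  have h : 2 ^ k ≤ 2 ^ (k + 1) - 1 := by
    have := Nat.one_le_two_pow (n := k); rw [pow_succ]; omega
  exact Real.log_le_log (by positivity) (by exact_mod_cast h)

lemma hyperbolicity_log_bounds {k M : ℕ} {τ : Fin (2 ^ k) → Fin (2 ^ k)} (hM : 6 ≤ M)
    (hk : 3 * M ≤ k) (v : Fin (2 ^ k)) (hv : 2 ^ (3 * (k / M)) ≤ cycDist (2 ^ k) (τ v) v) :
    1 / (4 * M) * Real.log ((2 ^ (k + 1) - 1 : ℕ) : ℝ) ≤ hyperbolicity (rrtGraph k τ) ∧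
      hyperbolicity (rrtGraph k τ) ≤ 3 * Real.log ((2 ^ (k + 1) - 1 : ℕ) : ℝ) := by
  set m := k / M
  have hm : 1 ≤ m := (Nat.le_div_iff_mul_le (by omega)).mpr (by omega)
  have hmk : 2 * m ≤ k := by
    have := (Nat.mul_le_mul_left m hM).trans (Nat.div_mul_le_self k M)
    omega
  have hlow := hyperbolicity_rrtGraph_ge hm hmk v (cycDist_comm _ _ _ ▸ hv)
  have hlog := log_card_le k
  have hlog2 := mul_log_two_le_log_card k
  have hkm : (k : ℝ) < M * (m + 1) := by exact_mod_cast Nat.lt_mul_div_succ k (by omega)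
  have hk' : (3 * M : ℝ) ≤ k := by exact_mod_cast hk
  have hM' : (6 : ℝ) ≤ M := by exact_mod_cast hM
  constructor
  · calc 1 / (4 * M) * Real.log ((2 ^ (k + 1) - 1 : ℕ) : ℝ) ≤ 1 / (4 * M) * (k + 1) := by
          gcongr
      _ ≤ m - 1 / 2 := by
          rw [div_mul_eq_mul_div, one_mul, div_le_iff₀ (by positivity)]
          nlinarith
      _ ≤ _ := hlow
  · calc hyperbolicity (rrtGraph k τ) ≤ 2 * k := hyperbolicity_rrtGraph_le
      _ ≤ 3 * (k * Real.log 2) := by nlinarith [Real.log_two_gt_d9, (k.cast_nonneg : (0 : ℝ) ≤ k)]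
      _ ≤ _ := by linarith

end RRT

open RRT

/-- Fix `α > 0` and `g(u,v) = d_R(u,v)^{-α}`. There are constants
`c₁, c₂ > 0` (depending only on `α`) such that with probability `1 - o(1)` as
`n = 2^(k+1) - 1 → ∞`, the random ringed tree satisfies
`c₁ log n ≤ δ(RRT(k+1, g)) ≤ c₂ log n`. -/
theorem rrt_power_law_decay_not_hyperbolic (α : ℝ) (hα : 0 < α) :
    ∃ c₁ : ℝ, 0 < c₁ ∧ ∃ c₂ : ℝ, 0 < c₂ ∧
      Filter.Tendsto
        (fun k : ℕ =>
          leafChoiceMeasure k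
            (fun u v => ((cycDist (2 ^ k) (u : ℕ) (v : ℕ) : ℕ) : ℝ) ^ (-α))
            {τ | c₁ * Real.log (((2 ^ (k + 1) - 1 : ℕ) : ℝ)) ≤ hyperbolicity (rrtGraph k τ) ∧
              hyperbolicity (rrtGraph k τ) ≤ c₂ * Real.log (((2 ^ (k + 1) - 1 : ℕ) : ℝ))})
        Filter.atTop (nhds 1) := by
  set M := 6 * (⌈α⌉₊ + 1)
  refine ⟨1 / (4 * M), by positivity, 3, by norm_num, ?_⟩
  change Tendsto (fun k => leafChoiceMeasure k (powerLaw k α) _) atTop _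
  have hshort := tendsto_leafChoiceMeasure_shortChoices hα.le (Nat.le_ceil α)
  refine tendsto_of_tendsto_of_tendsto_of_le_of_le'
    (by simpa using ENNReal.Tendsto.sub tendsto_const_nhds hshort (Or.inl ENNReal.one_ne_top))
    tendsto_const_nhds ?_ ?_
  · filter_upwards [eventually_ge_atTop (3 * M)] with k hk
    have := isProbabilityMeasure_leafChoiceMeasure (α := α) (k := k) (by omega)
    rw [← prob_compl_eq_one_sub MeasurableSet.of_discrete]
    refine measure_mono fun τ hτ => ?_
    obtain ⟨v, hv⟩ := exists_le_cycDist_of_notMem_shortChoices hτ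
    exact hyperbolicity_log_bounds (by omega) hk v hv
  · filter_upwards [eventually_ge_atTop 1] with k hk
    have := isProbabilityMeasure_leafChoiceMeasure (α := α) hk
    exact prob_le_one
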